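/- arXiv:math/0409093 — 8 statements merged into one kernel-verified Lean document; each statement's English description precedes it below -/
import Mathlib

section
/- The spinor bilinear pairing is invariant under the B-field action: for every 2-form B ∈ ∧²V* and all α, β ∈ ∧•V*, we have ⟨e^B ∧ α, e^B ∧ β⟩ = ⟨α, β⟩, where e^B := Σ_{k≥0} B^{∧k}/k! (a finite sum since B is nilpotent in ∧•V*). -/
set_option synthInstance.maxHeartbeats 1000000
set_option maxHeartbeats 1000000

open ExteriorAlgebra Finset Polynomial

section Aux

variable {M : Type*} [AddCommGroup M] [Module ℝ M]

private lemma ι_mul_ι_central (a b : M) (x : ExteriorAlgebra ℝ M) :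
    Commute (ι ℝ a * ι ℝ b) x := by
  have h : ∀ u v : M, ι ℝ u * ι ℝ v = -(ι ℝ v * ι ℝ u) := fun u v =>
    eq_neg_of_add_eq_zero_left (ι_add_mul_swap u v)
  induction x using CliffordAlgebra.induction with
  | algebraMap r => exact (Algebra.commutes r _).symm
  | ι m =>
    show (ι ℝ a * ι ℝ b) * ι ℝ m = ι ℝ m * (ι ℝ a * ι ℝ b)
    calc (ι ℝ a * ι ℝ b) * ι ℝ m = ι ℝ a * (ι ℝ b * ι ℝ m) := mul_assoc _ _ _
    _ = -(ι ℝ a * (ι ℝ m * ι ℝ b)) := by rw [h b m, mul_neg]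
    _ = -(-(ι ℝ m * ι ℝ a) * ι ℝ b) := by rw [← mul_assoc, h a m]
    _ = ι ℝ m * (ι ℝ a * ι ℝ b) := by rw [neg_mul, neg_neg, mul_assoc]
  | mul x y hx hy => exact hx.mul_right hy
  | add x y hx hy => exact hx.add_right hy

private lemma central_of_mem_two {B : ExteriorAlgebra ℝ M} (hB : B ∈ ⋀[ℝ]^2 M)
    (x : ExteriorAlgebra ℝ M) : Commute B x := by
  rw [exteriorPower, pow_two] at hB
  refine Submodule.mul_induction_on hB ?_ ?_
  · rintro m ⟨a, rfl⟩ p ⟨b, rfl⟩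
    exact ι_mul_ι_central a b x
  · intro y z hy hz
    exact hy.add_left hz

private lemma reverse_of_mem_two {B : ExteriorAlgebra ℝ M} (hB : B ∈ ⋀[ℝ]^2 M) :
    CliffordAlgebra.reverse B = -B := by
  rw [exteriorPower, pow_two] at hB
  refine Submodule.mul_induction_on hB ?_ ?_
  · rintro m ⟨a, rfl⟩ p ⟨b, rfl⟩
    rw [CliffordAlgebra.reverse.map_mul, CliffordAlgebra.reverse_ι,
      CliffordAlgebra.reverse_ι]
    exact eq_neg_of_add_eq_zero_left (ι_add_mul_swap b a)
  · intro y z hy hz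
    rw [map_add, hy, hz, neg_add]

private lemma exteriorPower_eq_bot_of_lt [Module.Finite ℝ M] {p : ℕ}
    (hp : Module.finrank ℝ M < p) : ⋀[ℝ]^p M = ⊥ := by
  rw [← ιMulti_span_fixedDegree, Submodule.span_eq_bot]
  rintro x ⟨v, rfl⟩
  refine AlternatingMap.map_linearDependent _ v fun hv => ?_
  have := hv.fintype_card_le_finrank
  simp only [Fintype.card_fin] at this
  omega

private lemma pow_eq_zero_of_mem_two [Module.Finite ℝ M] {B : ExteriorAlgebra ℝ M}
    (hB : B ∈ ⋀[ℝ]^2 M) {k : ℕ} (hk : Module.finrank ℝ M < 2 * k) : B ^ k = 0 := by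
  have h1 : B ^ k ∈ ⋀[ℝ]^(2 * k) M := by
    rw [exteriorPower, pow_mul]
    exact Submodule.pow_mem_pow _ hB k
  rw [exteriorPower_eq_bot_of_lt hk, Submodule.mem_bot] at h1
  exact h1

private lemma key_coeff (m : ℕ) :
    (∑ k ∈ range (m + 1),
      ((k.factorial : ℝ))⁻¹ * ((-1) ^ (m - k) * (((m - k).factorial : ℝ))⁻¹))
      = if m = 0 then 1 else 0 := by
  have h1 : ∀ k ∈ range (m + 1),
      ((k.factorial : ℝ))⁻¹ * ((-1) ^ (m - k) * (((m - k).factorial : ℝ))⁻¹)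
        = ((m.factorial : ℝ))⁻¹ * ((-1) ^ (m - k) * (m.choose (m - k) : ℝ)) := by
    intro k hk
    rw [mem_range, Nat.lt_succ_iff] at hk
    have hcf : (m.choose k : ℝ) * k.factorial * (m - k).factorial = m.factorial := by
      exact_mod_cast congrArg Nat.cast (Nat.choose_mul_factorial_mul_factorial hk)
    rw [Nat.choose_symm hk]
    have hk0 : (k.factorial : ℝ) ≠ 0 := Nat.cast_ne_zero.mpr k.factorial_ne_zero
    have hmk0 : ((m - k).factorial : ℝ) ≠ 0 := Nat.cast_ne_zero.mpr (m - k).factorial_ne_zero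
    have hm0 : (m.factorial : ℝ) ≠ 0 := Nat.cast_ne_zero.mpr m.factorial_ne_zero
    have hc0 : (m.choose k : ℝ) ≠ 0 := Nat.cast_ne_zero.mpr (Nat.choose_pos hk).ne'
    rw [← hcf]
    field_simp
  rw [Finset.sum_congr rfl h1, ← Finset.mul_sum]
  have h2 : ∑ k ∈ range (m + 1), ((-1 : ℝ)) ^ (m - k) * (m.choose (m - k) : ℝ)
      = ∑ k ∈ range (m + 1), ((-1 : ℝ)) ^ k * (m.choose k : ℝ) := by
    have := Finset.sum_range_reflect (fun j => ((-1 : ℝ)) ^ j * (m.choose j : ℝ)) (m + 1)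
    simpa [mul_comm] using this
  rw [h2]
  have h3 : ∑ k ∈ range (m + 1), ((-1 : ℝ)) ^ k * (m.choose k : ℝ)
      = ((if m = 0 then 1 else 0 : ℤ) : ℝ) := by
    rw [← Int.alternating_sum_range_choose]
    push_cast
    rfl
  rw [h3]
  rcases eq_or_ne m 0 with h | h <;> simp [h]

private lemma exp_mul_exp_neg [Module.Finite ℝ M] {n : ℕ} (hn : Module.finrank ℝ M = n)
    {B : ExteriorAlgebra ℝ M} (hB : B ∈ ⋀[ℝ]^2 M) :
    (∑ k ∈ range (n + 1), ((k.factorial : ℝ))⁻¹ • B ^ k) *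
      (∑ k ∈ range (n + 1), ((-1 : ℝ) ^ k * ((k.factorial : ℝ))⁻¹) • B ^ k) = 1 := by
  set P : ℝ[X] := ∑ k ∈ range (n + 1), C ((k.factorial : ℝ))⁻¹ * X ^ k with hP
  set Q : ℝ[X] := ∑ k ∈ range (n + 1), C ((-1 : ℝ) ^ k * ((k.factorial : ℝ))⁻¹) * X ^ k with hQ
  have hPa : aeval B P = ∑ k ∈ range (n + 1), ((k.factorial : ℝ))⁻¹ • B ^ k := by
    rw [hP, map_sum]
    refine Finset.sum_congr rfl fun k _ => ?_
    rw [map_mul, aeval_C, map_pow, aeval_X, ← Algebra.smul_def]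
  have hQa : aeval B Q = ∑ k ∈ range (n + 1), ((-1 : ℝ) ^ k * ((k.factorial : ℝ))⁻¹) • B ^ k := by
    rw [hQ, map_sum]
    refine Finset.sum_congr rfl fun k _ => ?_
    rw [map_mul, aeval_C, map_pow, aeval_X, ← Algebra.smul_def]
  have hPd : P.natDegree ≤ n := by
    refine natDegree_sum_le_of_forall_le _ _ fun k hk => ?_
    refine le_trans (natDegree_C_mul_le _ _) ?_
    rw [natDegree_X_pow]
    exact Nat.lt_succ_iff.mp (mem_range.mp hk)
  have hQd : Q.natDegree ≤ n := by
    refine natDegree_sum_le_of_forall_le _ _ fun k hk => ?_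
    refine le_trans (natDegree_C_mul_le _ _) ?_
    rw [natDegree_X_pow]
    exact Nat.lt_succ_iff.mp (mem_range.mp hk)
  have hd : (P * Q).natDegree < 2 * n + 2 := by
    have := natDegree_mul_le (p := P) (q := Q)
    omega
  have hPc : ∀ j ≤ n, P.coeff j = ((j.factorial : ℝ))⁻¹ := by
    intro j hj
    rw [hP, finset_sum_coeff]
    simp only [coeff_C_mul, coeff_X_pow, mul_ite, mul_one, mul_zero]
    rw [Finset.sum_ite_eq (range (n + 1)) j]
    simp [Nat.lt_succ_of_le hj]
  have hQc : ∀ j ≤ n, Q.coeff j = (-1 : ℝ) ^ j * ((j.factorial : ℝ))⁻¹ := by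
    intro j hj
    rw [hQ, finset_sum_coeff]
    simp only [coeff_C_mul, coeff_X_pow, mul_ite, mul_one, mul_zero]
    rw [Finset.sum_ite_eq (range (n + 1)) j]
    simp [Nat.lt_succ_of_le hj]
  have hcoeff : ∀ m ≤ n, (P * Q).coeff m = if m = 0 then 1 else 0 := by
    intro m hm
    rw [coeff_mul, Finset.Nat.sum_antidiagonal_eq_sum_range_succ_mk]
    rw [← key_coeff m]
    refine Finset.sum_congr rfl fun k hk => ?_
    rw [mem_range, Nat.lt_succ_iff] at hk
    rw [hPc k (le_trans hk hm), hQc (m - k) (le_trans (Nat.sub_le m k) hm)]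
  rw [← hPa, ← hQa, ← map_mul, aeval_eq_sum_range' hd]
  have hzero : ∀ m ∈ range (2 * n + 2), m ∉ range (n + 1) → (P * Q).coeff m • B ^ m = 0 := by
    intro m _ hm
    rw [mem_range, not_lt] at hm
    have : B ^ m = 0 := pow_eq_zero_of_mem_two hB (by omega)
    rw [this, smul_zero]
  rw [← Finset.sum_subset (Finset.range_subset_range.mpr (by omega)) hzero]
  rw [Finset.sum_eq_single 0]
  · rw [hcoeff 0 (Nat.zero_le n), if_pos rfl, pow_zero, one_smul]
  · intro m hm hm0
    rw [mem_range, Nat.lt_succ_iff] at hm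
    rw [hcoeff m hm, if_neg hm0, zero_smul]
  · intro h
    exact absurd (mem_range.mpr (Nat.succ_pos n)) h

private lemma reverse_pow_of_mem_two {B : ExteriorAlgebra ℝ M} (hB : B ∈ ⋀[ℝ]^2 M)
    (k : ℕ) : CliffordAlgebra.reverse (B ^ k) = (-1 : ℝ) ^ k • B ^ k := by
  induction k with
  | zero => simp
  | succ k ih =>
    rw [pow_succ, CliffordAlgebra.reverse.map_mul, ih, reverse_of_mem_two hB]
    rw [mul_smul_comm, neg_mul, ← pow_succ', ← pow_succ]
    rw [pow_succ (-1 : ℝ), mul_smul, neg_one_smul, smul_neg]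

end Aux

/-- The spinor bilinear pairing `⟨α, β⟩` on `∧•V*`: the degree-`n` component of
`α ∧ σ(β)`, where `σ` is the reversal anti-automorphism. -/
noncomputable def spinorPairing (V : Type*) [AddCommGroup V] [Module ℝ V] (n : ℕ)
    (α β : ExteriorAlgebra ℝ (Module.Dual ℝ V)) :
    ExteriorAlgebra ℝ (Module.Dual ℝ V) :=
  GradedAlgebra.proj (fun i : ℕ => ⋀[ℝ]^i (Module.Dual ℝ V)) n
    (α * CliffordAlgebra.reverse β)

/-- The spinor bilinear pairing is invariant under the B-field action
`α ↦ e^B ∧ α` for a 2-form `B`, where `e^B = Σ_k B^{∧k}/k!` (a finite sum since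
`B` is nilpotent: `B^k = 0` as soon as `2k > n`, so truncating at `k = n` loses
nothing). -/
theorem spinorPairing_bfield_invariant (V : Type*) [AddCommGroup V] [Module ℝ V]
    [FiniteDimensional ℝ V] (n : ℕ) (hn : Module.finrank ℝ V = n)
    (B : ExteriorAlgebra ℝ (Module.Dual ℝ V)) (hB : B ∈ ⋀[ℝ]^2 (Module.Dual ℝ V))
    (expB : ExteriorAlgebra ℝ (Module.Dual ℝ V))
    (hexp : expB = ∑ k ∈ Finset.range (n + 1), ((k.factorial : ℝ))⁻¹ • B ^ k) :
    ∀ α β : ExteriorAlgebra ℝ (Module.Dual ℝ V),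
      spinorPairing V n (expB * α) (expB * β) = spinorPairing V n α β := by
  intro α β
  have hn' : Module.finrank ℝ (Module.Dual ℝ V) = n := by
    rw [Subspace.dual_finrank_eq, hn]
  have hC : ∀ x, Commute expB x := by
    intro x
    rw [hexp]
    refine Commute.sum_left _ _ _ fun k _ => ?_
    exact (((central_of_mem_two hB x).pow_left k).smul_left _)
  have hrev : CliffordAlgebra.reverse expB
      = ∑ k ∈ range (n + 1), ((-1 : ℝ) ^ k * ((k.factorial : ℝ))⁻¹) • B ^ k := by
    rw [hexp, map_sum]
    refine Finset.sum_congr rfl fun k _ => ?_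
    rw [LinearMap.map_smul, reverse_pow_of_mem_two hB k, smul_smul, mul_comm]
  have hone : expB * CliffordAlgebra.reverse expB = 1 := by
    rw [hrev, hexp]
    exact exp_mul_exp_neg hn' hB
  have hmain : (expB * α) * CliffordAlgebra.reverse (expB * β)
      = α * CliffordAlgebra.reverse β := by
    rw [CliffordAlgebra.reverse.map_mul]
    calc (expB * α) * (CliffordAlgebra.reverse β * CliffordAlgebra.reverse expB)
        = (expB * (α * CliffordAlgebra.reverse β)) * CliffordAlgebra.reverse expB := by
          rw [← mul_assoc, mul_assoc expB α]
      _ = ((α * CliffordAlgebra.reverse β) * expB) * CliffordAlgebra.reverse expB := by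
          rw [(hC (α * CliffordAlgebra.reverse β)).eq]
      _ = (α * CliffordAlgebra.reverse β) * (expB * CliffordAlgebra.reverse expB) := by
          rw [mul_assoc]
      _ = α * CliffordAlgebra.reverse β := by rw [hone, mul_one]
  simp only [spinorPairing, hmain]
end

section
/- A subspace C ≤ V ⊕ V* is n-dimensional with the canonical pairing positive definite on C if and only if there exist a (unique) positive definite symmetric bilinear form g on V and a (unique) alternating bilinear form b on V such that C is the graph of b + g, i.e. C = { x ⊕ (b(x,·) + g(x,·)) : x ∈ V }. -/
/-!
The pairing of `x ⊕ ξ` with itself is `ξ x`, so a positive definite `C` meets `0 ⊕ V*` only in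
`0`; having dimension `n` it is then the graph of a linear map `A : V → V*`, that is, of a
bilinear form with `A x x > 0` for `x ≠ 0`. Since `2` is invertible, `A` splits uniquely as
`b + g` with `g` symmetric and `b` alternating, and `A x x = g x x`.
-/

/-- The canonical pairing on `V ⊕ V*`:  `⟨x ⊕ ξ, y ⊕ η⟩ = ½(ξ(y) + η(x))`. -/
noncomputable def canonicalPairing (V : Type*) [AddCommGroup V] [Module ℝ V]
    (u v : V × Module.Dual ℝ V) : ℝ :=
  (u.2 v.1 + v.2 u.1) / 2

open Module LinearMap
open LinearMap (BilinForm)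

namespace LinearMap

variable {R M N : Type*} [Semiring R] [AddCommMonoid M] [AddCommMonoid N] [Module R M] [Module R N]

theorem graph_injective :
    Function.Injective (graph : (M →ₗ[R] N) → Submodule R (M × N)) := by
  intro f g h
  ext x
  have hx : (x, f x) ∈ g.graph := h ▸ (f.mem_graph_iff (x, f x)).mpr rfl
  exact (g.mem_graph_iff _).mp hx

theorem coe_eq_setOf_iff_eq_graph (C : Submodule R (M × N)) (f : M →ₗ[R] N) :
    (C : Set (M × N)) = {p | ∃ x, p = (x, f x)} ↔ C = f.graph := by
  have hf : ({p | ∃ x, p = (x, f x)} : Set (M × N)) = f.graph := by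
    ext p
    exact ⟨fun ⟨x, hx⟩ => hx ▸ rfl, fun hp => ⟨p.1, Prod.ext rfl hp⟩⟩
  rw [hf, SetLike.coe_set_eq]

theorem finrank_graph {K M N : Type*} [DivisionRing K] [AddCommGroup M] [AddCommGroup N]
    [Module K M] [Module K N] (f : M →ₗ[K] N) : finrank K f.graph = finrank K M := by
  rw [graph_eq_range_prod, finrank_range_of_inj fun x y h => congrArg Prod.fst h]

end LinearMap

theorem Submodule.exists_eq_graph_of_finrank_eq {K M N : Type*} [DivisionRing K] [AddCommGroup M]
    [AddCommGroup N] [Module K M] [Module K N] [FiniteDimensional K M] {C : Submodule K (M × N)}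
    (hC : ∀ u ∈ C, u.1 = 0 → u = 0) (hdim : finrank K C = finrank K M) :
    ∃ f : M →ₗ[K] N, C = f.graph := by
  have hinj : Function.Injective (LinearMap.fst K M N ∘ₗ C.subtype) := by
    rw [← ker_eq_bot, ker_eq_bot']
    exact fun u hu => Subtype.ext (hC u u.2 hu)
  have : FiniteDimensional K C := .of_injective _ hinj
  exact C.exists_eq_graph ⟨hinj, (injective_iff_surjective_of_finrank_eq_finrank hdim).mp hinj⟩

namespace LinearMap.BilinForm

variable {R M : Type*} [CommRing R] [Invertible (2 : R)] [AddCommGroup M] [Module R M]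

theorem existsUnique_isSymm_isAlt_add_eq (B : BilinForm R M) :
    ∃! gb : BilinForm R M × BilinForm R M, gb.1.IsSymm ∧ gb.2.IsAlt ∧ gb.2 + gb.1 = B := by
  have h2 := invOf_mul_self (2 : R)
  refine ⟨(⅟(2 : R) • (B + B.flip), ⅟(2 : R) • (B - B.flip)), ⟨?_, ?_, ?_⟩, ?_⟩
  · exact isSymm_def.mpr fun x y => by simp only [smul_apply, add_apply, flip_apply, add_comm]
  · intro x
    simp only [smul_apply, sub_apply, flip_apply, sub_self, smul_zero]
  · ext x y
    simp only [add_apply, smul_apply, sub_apply, flip_apply, smul_eq_mul]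
    linear_combination B x y * h2
  · rintro ⟨g, b⟩ ⟨hg, hb, rfl⟩
    ext x y <;> simp only [add_apply, smul_apply, sub_apply, flip_apply, smul_eq_mul]
    · linear_combination ⅟(2 : R) * hb.neg_eq x y + ⅟(2 : R) * hg.eq x y - g x y * h2
    · linear_combination -⅟(2 : R) * hb.neg_eq x y - ⅟(2 : R) * hg.eq x y - b x y * h2

end LinearMap.BilinForm

section canonicalPairing

variable {V : Type*} [AddCommGroup V] [Module ℝ V]

theorem canonicalPairing_self (u : V × Dual ℝ V) : canonicalPairing V u u = u.2 u.1 := by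
  rw [canonicalPairing, add_self_div_two]

theorem eq_zero_of_fst_eq_zero_of_canonicalPairing_pos {C : Submodule ℝ (V × Dual ℝ V)}
    (hC : ∀ u ∈ C, u ≠ 0 → 0 < canonicalPairing V u u) (u : V × Dual ℝ V) (hu : u ∈ C)
    (h1 : u.1 = 0) : u = 0 := by
  by_contra hne
  simpa [canonicalPairing_self, h1] using hC u hu hne

theorem canonicalPairing_pos_on_graph_iff (A : V →ₗ[ℝ] Dual ℝ V) :
    (∀ u ∈ A.graph, u ≠ 0 → 0 < canonicalPairing V u u) ↔
      ∀ x, x ≠ 0 → 0 < A x x := by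
  constructor
  · intro h x hx
    simpa [canonicalPairing_self] using h (x, A x) rfl fun h0 => hx (congrArg Prod.fst h0)
  · rintro h ⟨x, ξ⟩ hξ hu
    obtain rfl : ξ = A x := hξ
    rw [canonicalPairing_self]
    exact h x fun hx => hu (by simp [hx])

end canonicalPairing

/-- A subspace `C ≤ V ⊕ V*` is `n`-dimensional and positive definite for the canonical
pairing iff it is the graph of `b + g` for a unique pair `(g, b)` of a positive definite
symmetric bilinear form `g` and an alternating bilinear form `b` on `V`. -/
theorem posDef_subspace_iff_graph (V : Type*) [AddCommGroup V] [Module ℝ V]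
    [FiniteDimensional ℝ V] (n : ℕ) (hn : Module.finrank ℝ V = n)
    (C : Submodule ℝ (V × Module.Dual ℝ V)) :
    (Module.finrank ℝ C = n ∧ ∀ u ∈ C, u ≠ 0 → 0 < canonicalPairing V u u) ↔
    ∃! gb : LinearMap.BilinForm ℝ V × LinearMap.BilinForm ℝ V,
      (∀ x y : V, gb.1 x y = gb.1 y x) ∧
      (∀ x : V, x ≠ 0 → 0 < gb.1 x x) ∧
      (∀ x : V, gb.2 x x = 0) ∧
      (↑C : Set (V × Module.Dual ℝ V)) = {p | ∃ x : V, p = (x, gb.2 x + gb.1 x)} := by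
  have hC_graph (gb : BilinForm ℝ V × BilinForm ℝ V) :
      (C : Set (V × Dual ℝ V)) = {p | ∃ x, p = (x, gb.2 x + gb.1 x)} ↔
        C = (gb.2 + gb.1).graph :=
    coe_eq_setOf_iff_eq_graph C (gb.2 + gb.1)
  subst hn
  constructor
  · rintro ⟨hdim, hpos⟩
    obtain ⟨A, rfl⟩ := C.exists_eq_graph_of_finrank_eq
      (eq_zero_of_fst_eq_zero_of_canonicalPairing_pos hpos) hdim
    rw [canonicalPairing_pos_on_graph_iff] at hpos
    refine (existsUnique_congr fun gb => ?_).mpr (BilinForm.existsUnique_isSymm_isAlt_add_eq A)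
    rw [hC_graph, graph_injective.eq_iff, BilinForm.isSymm_def]
    constructor
    · rintro ⟨hg, -, hb, hA⟩
      exact ⟨hg, hb, hA.symm⟩
    · rintro ⟨hg, hb, rfl⟩
      exact ⟨hg, fun x hx => by simpa [hb x] using hpos x hx, hb, rfl⟩
  · rintro ⟨gb, ⟨-, hg, hb, hC⟩, -⟩
    rw [hC_graph] at hC
    subst hC
    refine ⟨finrank_graph _, (canonicalPairing_pos_on_graph_iff _).mpr fun x hx => ?_⟩
    simpa [hb x] using hg x hx
end

section
/- Let g be a positive definite symmetric bilinear form on V and b an alternating bilinear form on V, and set C₊ = { x ⊕ (b(x,·) + g(x,·)) : x ∈ V } and C₋ = { x ⊕ (b(x,·) − g(x,·)) : x ∈ V }. Then V ⊕ V* = C₊ ⊕ C₋, the canonical pairing is positive definite on C₊ and negative definite on C₋, and C₋ is the orthogonal complement of C₊ with respect to the canonical pairing. -/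
theorem LinearMap.fst_ne_zero_of_mem_graph {R M N : Type*} [Semiring R] [AddCommMonoid M]
    [AddCommMonoid N] [Module R M] [Module R N] {f : M →ₗ[R] N} {u : M × N}
    (hu : u ∈ f.graph) (hu0 : u ≠ 0) : u.1 ≠ 0 := by
  intro h
  rw [LinearMap.mem_graph_iff, h, map_zero] at hu
  exact hu0 (Prod.ext h hu)

theorem LinearMap.isCompl_graph_of_bijective_sub {R M N : Type*} [Ring R] [AddCommGroup M]
    [AddCommGroup N] [Module R M] [Module R N] {f h : M →ₗ[R] N}
    (hfh : Function.Bijective (f - h)) : IsCompl f.graph h.graph := by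
  constructor
  · rw [Submodule.disjoint_def]
    intro u hf hh
    rw [LinearMap.mem_graph_iff] at hf hh
    have hu₁ : u.1 = 0 := hfh.1 (by simp [← hf, ← hh])
    exact Prod.ext hu₁ (by simp [hf, hu₁])
  · rw [codisjoint_iff, eq_top_iff]
    rintro ⟨x, ξ⟩ -
    obtain ⟨w, hw⟩ := hfh.2 (ξ - h x)
    -- `(x, ξ) = (w, f w) + (x - w, h (x - w))` because `(f - h) w = ξ - h x`
    refine Submodule.mem_sup.2 ⟨(w, f w), rfl, (x - w, h (x - w)), rfl, ?_⟩
    rw [LinearMap.sub_apply] at hw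
    ext <;> simp only [Prod.fst_add, Prod.snd_add, map_sub]
    · abel
    · rw [← sub_add_cancel ξ (h x), ← hw]
      abel

theorem Module.Dual.bijective_of_anisotropic {K V : Type*} [Field K] [AddCommGroup V]
    [Module K V] [FiniteDimensional K V] {B : V →ₗ[K] Module.Dual K V}
    (hB : ∀ x, B x x = 0 → x = 0) : Function.Bijective B := by
  have hinj : Function.Injective B :=
    (injective_iff_map_eq_zero B).2 fun x hx => hB x (by simp [hx])
  exact ⟨hinj, (LinearMap.injective_iff_surjective_of_finrank_eq_finrank
    Subspace.dual_finrank_eq.symm).1 hinj⟩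

theorem LinearMap.BilinForm.neg_flip_add {R M : Type*} [CommRing R] [AddCommGroup M]
    [Module R M] {b g : LinearMap.BilinForm R M} (hb : b.IsAlt) (hg : g.IsSymm) :
    -(b + g).flip = b - g := by
  ext x y
  rw [LinearMap.neg_apply, LinearMap.neg_apply, LinearMap.BilinForm.flip_apply,
    LinearMap.add_apply, LinearMap.add_apply, ← hb.neg_eq x y, hg.eq y x, LinearMap.sub_apply,
    LinearMap.sub_apply]
  abel

section canonicalPairing

variable {V : Type*} [AddCommGroup V] [Module ℝ V]

theorem canonicalPairing_self_of_mem_graph {f : V →ₗ[ℝ] Module.Dual ℝ V}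
    {u : V × Module.Dual ℝ V} (hu : u ∈ f.graph) : canonicalPairing V u u = f u.1 u.1 := by
  rw [canonicalPairing, ← (f.mem_graph_iff u).1 hu]
  ring

theorem mem_graph_neg_flip_iff (B : LinearMap.BilinForm ℝ V) (v : V × Module.Dual ℝ V) :
    v ∈ (-B.flip).graph ↔ ∀ u ∈ B.graph, canonicalPairing V u v = 0 := by
  obtain ⟨y, η⟩ := v
  rw [LinearMap.mem_graph_iff]
  constructor
  · rintro (rfl : η = -B.flip y) ⟨x, ξ⟩ (rfl : ξ = B x)
    simp [canonicalPairing]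
  · intro h
    ext x
    have hx := h (x, B x) rfl
    simp [canonicalPairing] at hx ⊢
    linarith

end canonicalPairing

/-- Given a positive definite symmetric bilinear form `g` and an alternating form `b`
on `V`, the graphs `C₊`, `C₋` of `b + g` and `b − g` give a decomposition
`V ⊕ V* = C₊ ⊕ C₋`, with the canonical pairing positive definite on `C₊`, negative
definite on `C₋`, and `C₋` the orthogonal complement of `C₊`. -/
theorem graph_decomposition (V : Type*) [AddCommGroup V] [Module ℝ V]
    [FiniteDimensional ℝ V]
    (g b : LinearMap.BilinForm ℝ V)
    (hgsymm : ∀ x y : V, g x y = g y x)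
    (hgpos : ∀ x : V, x ≠ 0 → 0 < g x x)
    (hbalt : ∀ x : V, b x x = 0)
    (Cplus Cminus : Submodule ℝ (V × Module.Dual ℝ V))
    (hCp : Cplus = LinearMap.range (LinearMap.prod (LinearMap.id : V →ₗ[ℝ] V) (b + g)))
    (hCm : Cminus = LinearMap.range (LinearMap.prod (LinearMap.id : V →ₗ[ℝ] V) (b - g))) :
    IsCompl Cplus Cminus ∧
    (∀ u ∈ Cplus, u ≠ 0 → 0 < canonicalPairing V u u) ∧
    (∀ u ∈ Cminus, u ≠ 0 → canonicalPairing V u u < 0) ∧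
    (∀ v : V × Module.Dual ℝ V,
      v ∈ Cminus ↔ ∀ u ∈ Cplus, canonicalPairing V u v = 0) := by
  rw [← LinearMap.graph_eq_range_prod] at hCp hCm
  subst hCp hCm
  have hflip : -(b + g).flip = b - g := LinearMap.BilinForm.neg_flip_add hbalt ⟨hgsymm⟩
  have hg : ∀ x, g x x = 0 → x = 0 := fun x hx => by_contra fun h => (hgpos x h).ne' hx
  refine ⟨LinearMap.isCompl_graph_of_bijective_sub
      (Module.Dual.bijective_of_anisotropic fun x hx => hg x ?_), ?_, ?_, ?_⟩
  · simpa [two_mul] using hx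
  · intro u hu hu0
    simpa [canonicalPairing_self_of_mem_graph hu, hbalt]
      using hgpos _ (LinearMap.fst_ne_zero_of_mem_graph hu hu0)
  · intro u hu hu0
    simpa [canonicalPairing_self_of_mem_graph hu, hbalt]
      using hgpos _ (LinearMap.fst_ne_zero_of_mem_graph hu hu0)
  · intro v
    rw [← hflip, mem_graph_neg_flip_iff]
end

section
/- Let g be a positive definite symmetric n×n real matrix and b a skew-symmetric n×n real matrix, and let G = [[−g⁻¹b, g⁻¹], [g − b g⁻¹ b, b g⁻¹]] and P = ½[[0, I], [I, 0]]. Then the 2n×2n matrix P·G is symmetric and positive definite. (This is the generalized Riemannian metric ⟨G·,·⟩ on T ⊕ T* determined by g and b.) -/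
/-! `2 P G = [[g - b g⁻¹ b, b g⁻¹], [-g⁻¹ b, g⁻¹]]` factors as `Lᵀ [[g, 0], [0, g⁻¹]] L` with the
shear `L = [[1, 0], [-b, 1]]`; its transpose is `[[1, b], [0, 1]]` because `b` is skew. A congruence
of the positive definite block-diagonal matrix by an invertible matrix is positive definite. -/

open Matrix

namespace Matrix

open scoped ComplexOrder

variable {m n : Type*} [Fintype m] [Fintype n]

theorem PosDef.fromBlocks_zero {𝕜 : Type*} [RCLike 𝕜] [DecidableEq m] [DecidableEq n]
    {A : Matrix m m 𝕜} {D : Matrix n n 𝕜} (hA : A.PosDef) (hD : D.PosDef) :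
    (fromBlocks A 0 0 D).PosDef := by
  have := hA.isUnit.invertible
  have hsemi : (fromBlocks A 0 0 D).PosSemidef := by
    simpa using (PosDef.fromBlocks₁₁ 0 D hA).mpr (by simpa using hD.posSemidef)
  exact hsemi.posDef_iff_isUnit.mpr (isUnit_fromBlocks_zero₂₁.mpr ⟨hA.isUnit, hD.isUnit⟩)

theorem fromBlocks_swap_mul_eq_shear_conj {α : Type*} [Ring α] [DecidableEq n]
    (g h b : Matrix n n α) :
    fromBlocks 0 1 1 0 * fromBlocks (-(h * b)) h (g - b * h * b) (b * h) =
      fromBlocks 1 b 0 1 * fromBlocks g 0 0 h * fromBlocks 1 0 (-b) 1 := by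
  simp [fromBlocks_multiply, Matrix.mul_assoc, sub_eq_add_neg]

end Matrix

/-- For `g` positive definite symmetric and `b` skew-symmetric, the generalized
Riemannian metric `P·G`, where `G = [[−g⁻¹b, g⁻¹], [g − b g⁻¹ b, b g⁻¹]]` and
`P = ½[[0,I],[I,0]]` is the canonical pairing, is symmetric and positive definite. -/
theorem generalized_metric_posDef (n : ℕ) (g b : Matrix (Fin n) (Fin n) ℝ)
    (hg : g.PosDef) (hbskew : bᵀ = -b)
    (G P : Matrix (Fin n ⊕ Fin n) (Fin n ⊕ Fin n) ℝ)
    (hG : G = fromBlocks (-(g⁻¹ * b)) g⁻¹ (g - b * g⁻¹ * b) (b * g⁻¹))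
    (hP : P = (1 / 2 : ℝ) • fromBlocks 0 1 1 0) :
    (P * G).IsSymm ∧ (P * G).PosDef := by
  set L : Matrix (Fin n ⊕ Fin n) (Fin n ⊕ Fin n) ℝ := fromBlocks 1 0 (-b) 1
  have hL : star L = fromBlocks 1 b 0 1 := by
    rw [star_eq_conjTranspose, conjTranspose_eq_transpose_of_trivial, fromBlocks_transpose]
    simp [hbskew]
  have hPG : P * G = (1 / 2 : ℝ) • (star L * fromBlocks g 0 0 g⁻¹ * L) := by
    rw [hP, hG, smul_mul, fromBlocks_swap_mul_eq_shear_conj, hL]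
  have hLunit : IsUnit L := isUnit_fromBlocks_zero₁₂.mpr ⟨isUnit_one, isUnit_one⟩
  have hpos : (P * G).PosDef := hPG ▸
    (hLunit.posDef_star_left_conjugate_iff.mpr (hg.fromBlocks_zero hg.inv)).smul (by norm_num)
  exact ⟨isHermitian_iff_isSymm.mp hpos.isHermitian, hpos⟩
end

section
/- Let g be a positive definite symmetric n×n real matrix and b a skew-symmetric n×n real matrix. Then the matrix g − b g⁻¹ b is symmetric and positive definite. (This is the restriction to T of the generalized Riemannian metric determined by g and b.) -/
open Matrix

/-- For `g` positive definite symmetric and `b` skew-symmetric, the matrix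
`g − b g⁻¹ b` (the restriction to `T` of the generalized Riemannian metric
determined by `g` and `b`) is symmetric and positive definite. -/
theorem restricted_metric_posDef (n : ℕ) (g b : Matrix (Fin n) (Fin n) ℝ)
    (hg : g.PosDef) (hbskew : bᵀ = -b) :
    (g - b * g⁻¹ * b).IsSymm ∧ (g - b * g⁻¹ * b).PosDef := by
  have key : g - b * g⁻¹ * b = g + bᴴ * g⁻¹ * b := by
    rw [conjTranspose_eq_transpose_of_trivial, hbskew, Matrix.neg_mul, Matrix.neg_mul,
      sub_eq_add_neg]
  have hps : (bᴴ * g⁻¹ * b).PosSemidef :=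
    hg.inv.posSemidef.conjTranspose_mul_mul_same b
  refine ⟨?_, ?_⟩
  · rw [key]
    exact by
      have := (hg.add_posSemidef hps).isHermitian
      rwa [IsHermitian, conjTranspose_eq_transpose_of_trivial] at this
  · rw [key]
    exact hg.add_posSemidef hps
end

section
/- Let g be an invertible symmetric n×n real matrix and b a skew-symmetric n×n real matrix. Then det(g − b g⁻¹ b) · det(g) = det(g + b)². (Equivalently, the volume form of the metric g − b g⁻¹ b equals det(g+b)/det(g)^{1/2} up to sign.) -/
open Matrix

namespace Matrix

variable {m R : Type*} [Fintype m] [DecidableEq m] [CommRing R]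

theorem sub_mul_nonsing_inv_mul_eq {g : Matrix m m R} (hg : IsUnit g.det) (b : Matrix m m R) :
    g - b * g⁻¹ * b = (g + b) * g⁻¹ * (g - b) := by
  simp only [mul_sub, add_mul, mul_nonsing_inv g hg, one_mul, nonsing_inv_mul_cancel_right g b hg]
  abel

theorem det_sub_eq_det_add_of_transpose {g b : Matrix m m R} (hg : gᵀ = g) (hb : bᵀ = -b) :
    (g - b).det = (g + b).det := by
  rw [← det_transpose, transpose_sub, hg, hb, sub_neg_eq_add]

end Matrix

/-- For `g` invertible symmetric and `b` skew-symmetric,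
`det(g − b g⁻¹ b) · det g = det(g + b)²`; equivalently the volume form of the
metric `g − b g⁻¹ b` equals `det(g+b)/det(g)^{1/2}` up to sign. -/
theorem det_restricted_metric (n : ℕ) (g b : Matrix (Fin n) (Fin n) ℝ)
    (hg : IsUnit g.det) (hgsymm : gᵀ = g) (hbskew : bᵀ = -b) :
    (g - b * g⁻¹ * b).det * g.det = (g + b).det ^ 2 := by
  calc (g - b * g⁻¹ * b).det * g.det
      = (g + b).det * (g - b).det * (g⁻¹.det * g.det) := by
        rw [sub_mul_nonsing_inv_mul_eq hg, det_mul, det_mul]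
        ring
    _ = (g + b).det ^ 2 := by
        rw [det_nonsing_inv_mul_det g hg, det_sub_eq_det_add_of_transpose hgsymm hbskew]
        ring
end

section
/- Let g be a positive definite symmetric n×n real matrix and b a skew-symmetric n×n real matrix. Then det(g + b) ≥ det(g) > 0; in particular g + b is invertible and the Born–Infeld volume det(g+b)/det(g)^{1/2} is positive. -/
/-!
Writing `g = S * S` with `S = √g`, we get `g + b = S * (1 + c) * S` with `c = S⁻¹ * b * S⁻¹`
again skew, so `det (g + b) = det g * det (1 + c)`. Since `(1 + c)ᵀ * (1 + c) = 1 + cᵀ * c`, the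
square of `det (1 + c)` is at least `1`; and `det (1 + c) > 0` because the quadratic form of
`1 + c` is that of `1`, so no matrix on the segment from `1` to `1 + c` is singular.
-/

open Matrix

namespace Matrix

variable {n : Type*} [Fintype n]

lemma dotProduct_mulVec_self_eq_zero_of_transpose_eq_neg {R : Type*} [CommRing R]
    [IsAddTorsionFree R] {c : Matrix n n R} (hc : cᵀ = -c) (x : n → R) : x ⬝ᵥ c *ᵥ x = 0 :=
  self_eq_neg.mp <| by
    conv_lhs => rw [dotProduct_mulVec, ← mulVec_transpose, hc, neg_mulVec, neg_dotProduct,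
      dotProduct_comm]

variable [DecidableEq n]

lemma det_ne_zero_of_forall_dotProduct_mulVec_pos {A : Matrix n n ℝ}
    (hA : ∀ x ≠ 0, 0 < x ⬝ᵥ A *ᵥ x) : A.det ≠ 0 := fun h ↦ by
  obtain ⟨x, hx, hAx⟩ := exists_mulVec_eq_zero_iff.mpr h
  simpa [hAx] using hA x hx

lemma det_pos_of_forall_dotProduct_mulVec_pos {A : Matrix n n ℝ}
    (hA : ∀ x ≠ 0, 0 < x ⬝ᵥ A *ᵥ x) : 0 < A.det := by
  set f : ℝ → ℝ := fun t ↦ ((1 - t) • (1 : Matrix n n ℝ) + t • A).det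
  have hf : Continuous f := by fun_prop
  have hf_ne : ∀ t ∈ Set.Icc (0 : ℝ) 1, f t ≠ 0 := fun t ⟨ht₀, ht₁⟩ ↦
    det_ne_zero_of_forall_dotProduct_mulVec_pos fun x hx ↦ by
      have hxx : 0 < x ⬝ᵥ x := by simpa using dotProduct_star_self_pos_iff.mpr hx
      simpa only [add_mulVec, smul_mulVec, one_mulVec, dotProduct_add, dotProduct_smul,
        smul_eq_mul, Set.mem_Ioi] using
        convex_Ioi (0 : ℝ) hxx (hA x hx) (sub_nonneg.mpr ht₁) ht₀ (sub_add_cancel 1 t)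
  by_contra! hle
  obtain ⟨t, ht, hft⟩ := intermediate_value_Icc' zero_le_one hf.continuousOn
    (⟨by simpa [f] using hle, by simp [f]⟩ : (0 : ℝ) ∈ Set.Icc (f 1) (f 0))
  exact hf_ne t ht hft

lemma one_le_det_one_add_of_posSemidef {Q : Matrix n n ℝ} (hQ : Q.PosSemidef) :
    1 ≤ (1 + Q).det := by
  have h : 1 + Q = Unitary.conjStarAlgAut ℝ _ hQ.1.eigenvectorUnitary
      (1 + diagonal (RCLike.ofReal ∘ hQ.1.eigenvalues)) := by
    rw [map_add, map_one, ← hQ.1.spectral_theorem]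
  rw [h, ← diagonal_one, diagonal_add]
  simpa [-Unitary.conjStarAlgAut_apply] using Finset.prod_le_prod (s := Finset.univ)
    (fun _ _ ↦ zero_le_one) fun i _ ↦ le_add_of_nonneg_right (hQ.eigenvalues_nonneg i)

lemma one_le_det_one_add_of_transpose_eq_neg {c : Matrix n n ℝ} (hc : cᵀ = -c) :
    1 ≤ (1 + c).det := by
  have hpos : 0 < (1 + c).det := det_pos_of_forall_dotProduct_mulVec_pos fun x hx ↦ by
    simpa [add_mulVec, dotProduct_mulVec_self_eq_zero_of_transpose_eq_neg hc] using
      dotProduct_star_self_pos_iff.mpr hx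
  have hsq : (1 + c).det * (1 + c).det = (1 + cᴴ * c).det := by
    have : (1 + c)ᵀ * (1 + c) = 1 + cᴴ * c := by
      rw [conjTranspose_eq_transpose_of_trivial, transpose_add, transpose_one, hc]
      noncomm_ring
    rw [← this, det_mul, det_transpose]
  have h1 := one_le_det_one_add_of_posSemidef (posSemidef_conjTranspose_mul_self c)
  nlinarith

open scoped MatrixOrder in
lemma PosDef.det_le_det_add_of_transpose_eq_neg {g b : Matrix n n ℝ} (hg : g.PosDef)
    (hb : bᵀ = -b) : g.det ≤ (g + b).det := by
  set S := CFC.sqrt g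
  have hS : Sᵀ = S := (CFC.sqrt_nonneg g).posSemidef.1
  have hSS : S * S = g := CFC.sqrt_mul_sqrt_self g hg.posSemidef.nonneg
  have hS_unit : IsUnit S.det := by
    refine isUnit_iff_ne_zero.mpr fun h ↦ hg.det_pos.ne' ?_
    rw [← hSS, det_mul, h, zero_mul]
  set c := S⁻¹ * b * S⁻¹
  have hc : cᵀ = -c := by
    simp only [c, transpose_mul, transpose_nonsing_inv, hS, hb, Matrix.mul_neg, Matrix.neg_mul,
      Matrix.mul_assoc]
  have hgb : g + b = S * (1 + c) * S := by
    simp only [c, Matrix.mul_add, Matrix.add_mul, Matrix.mul_one, hSS, ← Matrix.mul_assoc,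
      mul_nonsing_inv _ hS_unit, Matrix.one_mul]
    rw [Matrix.mul_assoc, nonsing_inv_mul _ hS_unit, Matrix.mul_one]
  have hdet : (g + b).det = g.det * (1 + c).det := by
    rw [hgb, ← hSS, det_mul, det_mul, det_mul]
    ring
  rw [hdet]
  exact le_mul_of_one_le_right hg.det_pos.le (one_le_det_one_add_of_transpose_eq_neg hc)

end Matrix

/-- For `g` positive definite symmetric and `b` skew-symmetric,
`det(g + b) ≥ det g > 0`; in particular `g + b` is invertible and the
Born–Infeld volume `det(g+b)/det(g)^{1/2}` is positive. -/
theorem bornInfeld_volume_pos (n : ℕ) (g b : Matrix (Fin n) (Fin n) ℝ)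
    (hg : g.PosDef) (hbskew : bᵀ = -b) :
    g.det ≤ (g + b).det ∧ 0 < g.det ∧ IsUnit (g + b).det ∧
      0 < (g + b).det / Real.sqrt g.det := by
  have hg_pos := hg.det_pos
  have hle := hg.det_le_det_add_of_transpose_eq_neg hbskew
  have hgb_pos := hg_pos.trans_le hle
  exact ⟨hle, hg_pos, hgb_pos.ne'.isUnit, div_pos hgb_pos (Real.sqrt_pos.mpr hg_pos)⟩
end

section
/- Let g be a positive definite symmetric n×n real matrix and J an n×n real matrix with J² = −I such that ω := gJ is skew-symmetric, and let J₁ = [[−J, 0], [0, Jᵀ]], J₂ = [[0, ω⁻¹], [−ω, 0]], and P = ½[[0, I], [I, 0]]. Then J₁ and J₂ are orthogonal with respect to the pairing P: J₁ᵀ P J₁ = P and J₂ᵀ P J₂ = P. -/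
open Matrix

/-- For a linear Kähler structure `(g, J, ω = gJ)`, the generalized complex structures
`J₁ = [[−J,0],[0,Jᵀ]]` and `J₂ = [[0,ω⁻¹],[−ω,0]]` are orthogonal with respect to the
canonical pairing `P = ½[[0,I],[I,0]]` on `ℝⁿ ⊕ (ℝⁿ)*`. -/
theorem kaehler_pair_orthogonal (n : ℕ) (g J : Matrix (Fin n) (Fin n) ℝ)
    (hg : g.PosDef) (hJ : J * J = -1) (hω : (g * J)ᵀ = -(g * J))
    (J₁ J₂ P : Matrix (Fin n ⊕ Fin n) (Fin n ⊕ Fin n) ℝ)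
    (hJ₁ : J₁ = fromBlocks (-J) 0 0 Jᵀ)
    (hJ₂ : J₂ = fromBlocks 0 (g * J)⁻¹ (-(g * J)) 0)
    (hP : P = (1 / 2 : ℝ) • fromBlocks 0 1 1 0) :
    J₁ᵀ * P * J₁ = P ∧ J₂ᵀ * P * J₂ = P := by
  subst hJ₁ hJ₂ hP
  have hginv : IsUnit g.det := isUnit_iff_ne_zero.2 hg.det_pos.ne'
  have hright : (g * J) * (-J * g⁻¹) = 1 := by
    have h1 : (g * J) * (-J * g⁻¹) = g * -(J * J) * g⁻¹ := by noncomm_ring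
    rw [h1, hJ]; simp [Matrix.mul_nonsing_inv g hginv]
  have hinv : (g * J)⁻¹ = -J * g⁻¹ := Matrix.inv_eq_right_inv hright
  have hr : (g * J) * (g * J)⁻¹ = 1 := by rw [hinv]; exact hright
  have hl : (g * J)⁻¹ * (g * J) = 1 := by
    rw [hinv, mul_eq_one_comm]; exact hright
  have hit : ((g * J)⁻¹)ᵀ = -(g * J)⁻¹ := by
    rw [Matrix.transpose_nonsing_inv, hω]
    refine Matrix.inv_eq_right_inv ?_
    simpa using hr
  have hJJt : Jᵀ * Jᵀ = -1 := by
    rw [← Matrix.transpose_mul, hJ]; simp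
  have hJsq : -J * -J = -1 := by simpa using hJ
  constructor
  · ext i j
    simp [Matrix.fromBlocks_transpose, Matrix.mul_smul, Matrix.smul_mul,
      Matrix.fromBlocks_multiply, hJJt, hJsq, Matrix.neg_mul, Matrix.mul_neg, hJ]
  · ext i j
    simp only [Matrix.fromBlocks_transpose, Matrix.transpose_zero, hω, hit,
      Matrix.mul_smul, Matrix.smul_mul, Matrix.fromBlocks_multiply,
      Matrix.neg_mul, Matrix.mul_neg, neg_neg, Matrix.transpose_neg, hr, hl,
      Matrix.mul_zero, Matrix.zero_mul, Matrix.mul_one, Matrix.one_mul,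
      add_zero, zero_add, neg_zero]
end
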